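/- For a real symmetric positive semidefinite n×n matrix L and any F ∈ ℝ^{n×k} with orthonormal columns (Fᵀ F = I_k), one has Tr(Fᵀ L F) ≥ σ_1 + … + σ_k, where σ_1 ≤ … ≤ σ_n are the eigenvalues of L. -/
import Mathlib


open Matrix Finset

lemma keyfan_aux {n k : ℕ} (hkn : k ≤ n) (σ p : Fin n → ℝ) (hmono : Monotone σ)
    (hp0 : ∀ i, 0 ≤ p i) (hp1 : ∀ i, p i ≤ 1) (hsum : ∑ i, p i = (k : ℝ)) :
    (∑ i : Fin k, σ (Fin.castLE hkn i)) ≤ ∑ i, σ i * p i := by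
  rcases Nat.eq_zero_or_pos n with hn | hn
  · subst hn
    interval_cases k
    simp
  set q : Fin n → ℝ := fun i => if i.val < k then 1 else 0 with hqdef
  set m : Fin n := ⟨min k (n - 1), by omega⟩ with hm
  set t : ℝ := σ m with ht
  have hfilter : (range n).filter (· < k) = range k := by
    ext j; simp only [mem_filter, mem_range]; omega
  have hq2 : ∑ i, σ i * q i = ∑ i : Fin k, σ (Fin.castLE hkn i) := by
    have h1 : ∑ i, σ i * q i =
        ∑ j ∈ range n, (if h : j < n then σ ⟨j, h⟩ * q ⟨j, h⟩ else 0) := by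
      rw [← Fin.sum_univ_eq_sum_range (fun j => if h : j < n then σ ⟨j, h⟩ * q ⟨j, h⟩ else 0) n]
      exact Finset.sum_congr rfl (fun i _ => by simp [i.isLt])
    rw [h1]
    have h2 : ∑ i : Fin k, σ (Fin.castLE hkn i) =
        ∑ j ∈ range k, (if h : j < n then σ ⟨j, h⟩ else 0) := by
      rw [← Fin.sum_univ_eq_sum_range (fun j => if h : j < n then σ ⟨j, h⟩ else 0) k]
      exact Finset.sum_congr rfl (fun i _ => by simp [lt_of_lt_of_le i.isLt hkn, Fin.castLE]) 
    rw [h2, ← hfilter, Finset.sum_filter]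
    apply Finset.sum_congr rfl
    intro j hj
    have hjn : j < n := mem_range.mp hj
    simp only [hjn, dif_pos, hqdef]
    by_cases hk : j < k <;> simp [hk]
  have hqsum : ∑ i, q i = (k : ℝ) := by
    have h1 : ∑ i, q i = ∑ j ∈ range n, (if j < k then (1:ℝ) else 0) := by
      exact (Fin.sum_univ_eq_sum_range (fun j => if j < k then (1:ℝ) else 0) n)
    rw [h1, ← Finset.sum_filter, hfilter]
    simp
  have key : ∀ i ∈ Finset.univ, 0 ≤ (σ i - t) * (p i - q i) := by
    intro i _
    by_cases h : i.val < k
    · have hq1 : q i = 1 := by simp [hqdef, h]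
      have hle : σ i ≤ t := hmono (by simp [hm, Fin.le_def]; omega)
      have := hp1 i
      nlinarith
    · have hq0 : q i = 0 := by simp [hqdef, h]
      have hle : t ≤ σ i := hmono (by simp [hm, Fin.le_def]; omega)
      have := hp0 i
      nlinarith
  have hpos : 0 ≤ ∑ i, (σ i - t) * (p i - q i) := Finset.sum_nonneg key
  have hexp : ∑ i, (σ i - t) * (p i - q i) =
      (∑ i, σ i * p i) - (∑ i, σ i * q i) - t * (∑ i, p i) + t * (∑ i, q i) := by
    rw [Finset.mul_sum, Finset.mul_sum]
    rw [← Finset.sum_sub_distrib, ← Finset.sum_sub_distrib, ← Finset.sum_add_distrib]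
    apply Finset.sum_congr rfl; intros; ring
  rw [← hq2]
  rw [hexp, hsum, hqsum] at hpos
  linarith

/-- The inequality direction of Ky Fan's theorem: for a real symmetric positive
semidefinite `n×n` matrix `L` with eigenvalues `σ 0 ≤ … ≤ σ (n-1)` (listed with
multiplicity via an orthogonal diagonalization) and any `F ∈ ℝ^{n×k}` with orthonormal
columns, `Tr(Fᵀ L F) ≥ σ_1 + … + σ_k`. -/
theorem stmt9 {n k : ℕ} (hkn : k ≤ n)
    (L U : Matrix (Fin n) (Fin n) ℝ) (σ : Fin n → ℝ) (hmono : Monotone σ)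
    (hU : U * Uᵀ = 1) (hdiag : L = U * Matrix.diagonal σ * Uᵀ) (hpsd : L.PosSemidef) :
    ∀ F : Matrix (Fin n) (Fin k) ℝ, Fᵀ * F = 1 →
      (∑ i : Fin k, σ (Fin.castLE hkn i)) ≤ (Fᵀ * L * F).trace := by
  intro F hF
  set G : Matrix (Fin n) (Fin k) ℝ := Uᵀ * F with hG
  have hGG : Gᵀ * G = 1 := by
    have : Gᵀ * G = Fᵀ * (U * Uᵀ) * F := by
      simp [hG, Matrix.transpose_mul, Matrix.mul_assoc]
    rw [this, hU, Matrix.mul_one, hF]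
  set p : Fin n → ℝ := fun i => ∑ j, G i j ^ 2 with hp
  -- rewrite the trace
  have htr : (Fᵀ * L * F).trace = ∑ i, σ i * p i := by
    have h1 : Fᵀ * L * F = Gᵀ * Matrix.diagonal σ * G := by
      rw [hdiag]
      simp [hG, Matrix.transpose_mul, Matrix.mul_assoc]
    rw [h1]
    have h2 : ∀ j, (Gᵀ * Matrix.diagonal σ * G) j j = ∑ i, σ i * G i j ^ 2 := by
      intro j
      rw [Matrix.mul_assoc, Matrix.mul_apply]
      exact Finset.sum_congr rfl fun i _ => by
        rw [Matrix.diagonal_mul, Matrix.transpose_apply]; ring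
    rw [Matrix.trace]
    simp only [Matrix.diag]
    rw [Finset.sum_congr rfl fun j _ => h2 j, Finset.sum_comm]
    exact Finset.sum_congr rfl fun i _ => by rw [hp, Finset.mul_sum]
  rw [htr]
  -- P = G Gᵀ is a symmetric idempotent with diagonal p
  set P : Matrix (Fin n) (Fin n) ℝ := G * Gᵀ with hP
  have hPsym : Pᵀ = P := by simp [hP, Matrix.transpose_mul]
  have hPP : P * P = P := by
    have : P * P = G * (Gᵀ * G) * Gᵀ := by simp [hP, Matrix.mul_assoc]
    rw [this, hGG, Matrix.mul_one]
  have hPdiag : ∀ i, P i i = p i := by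
    intro i
    rw [hP, Matrix.mul_apply, hp]
    exact Finset.sum_congr rfl fun j _ => by rw [Matrix.transpose_apply]; ring
  have hp0 : ∀ i, 0 ≤ p i := fun i => Finset.sum_nonneg fun j _ => sq_nonneg _
  have hp1 : ∀ i, p i ≤ 1 := by
    intro i
    have hQQ : (1 - P) * (1 - P) = 1 - P := by
      simp only [mul_sub, sub_mul, hPP, one_mul, mul_one]
      abel
    have hQsym : (1 - P)ᵀ = 1 - P := by
      rw [Matrix.transpose_sub, Matrix.transpose_one, hPsym]
    have h0 : 0 ≤ (1 - P) i i := by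
      rw [← hQQ, Matrix.mul_apply]
      apply Finset.sum_nonneg
      intro j _
      have : (1 - P) j i = (1 - P) i j := by
        conv_lhs => rw [← hQsym, Matrix.transpose_apply]
      rw [this]
      exact mul_self_nonneg _
    have : (1 - P) i i = 1 - P i i := by
      rw [Matrix.sub_apply, Matrix.one_apply_eq]
    rw [this, hPdiag] at h0
    linarith
  have hsum : ∑ i, p i = (k : ℝ) := by
    have h1 : ∑ i, p i = (Gᵀ * G).trace := by
      rw [Matrix.trace]
      simp only [Matrix.diag]
      have hd : ∀ j, (Gᵀ * G) j j = ∑ i, G i j ^ 2 := fun j => by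
        rw [Matrix.mul_apply]
        exact Finset.sum_congr rfl fun i _ => by rw [Matrix.transpose_apply]; ring
      calc ∑ i, p i = ∑ j, ∑ i, G i j ^ 2 := Finset.sum_comm
        _ = ∑ j, (Gᵀ * G) j j := Finset.sum_congr rfl fun j _ => (hd j).symm
    rw [h1, hGG, Matrix.trace_one]
    simp
  exact keyfan_aux hkn σ p hmono hp0 hp1 hsum
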